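/- Let $J \ge 1$, $x_1,\ldots,x_J \in \mathbb{C}^N$, $r_1,\ldots,r_J > 0$, and $\tilde{w} \in \mathbb{C}^N$. Define $H = [\frac{1}{r_1}x_1, \ldots, \frac{1}{r_J}x_J] \in \mathbb{C}^{N\times J}$, $\tilde{q} = H^H \tilde{w}$, assume $\tilde{q} \ne 0$, define the $J\times J$ matrix $\tilde{Q}$ with diagonal entries $\|\tilde{q}\|^2$ and off-diagonal entries $-\tilde{q}_i\tilde{q}_j^*$, and set $G = \frac{1}{\sqrt{J \sum_j |\tilde{q}_j|^4}} H \tilde{Q} H^H$. Then for all $w \in \mathbb{C}^N$, $\frac{1}{J}\sum_{j=1}^J \frac{|w^H x_j|^4}{r_j^4} \le (w^H G w)^2$, with equality when $w = \tilde{w}$. -/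

import Mathlib

/-!
With `q = Hᴴ w` one has `|wᴴ x_j| / r_j = |q_j|`, so the cost is `(1/J) Σ |q_j|⁴`, and
`wᴴ G w = qᴴ Q̃ q / √(J Σ |q̃_j|⁴)` with
`qᴴ Q̃ q = ‖q‖² ‖q̃‖² - |qᴴ q̃|² + Σ |q_j|² |q̃_j|²` (`majorizerForm q q̃`).
At `q = q̃` the first two terms cancel and `qᴴ Q̃ q = Σ |q̃_j|⁴`, which gives tangency.
Since `|qᴴ q̃| ≤ Σ a_j b_j` for `a = |q|`, `b = |q̃|`, the majorization reduces to the real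
inequality `(Σ a⁴)(Σ b⁴) ≤ (L + D)²`, where `L = (Σ a²)(Σ b²) - (Σ a b)²` and `D = Σ a² b²`.
By Lagrange's identity, `(Σ a⁴)(Σ b⁴) - D²` and `L` are sums over pairs of
`(α² - β²)²` and `(α - β)²` respectively, where `α = a_i b_j`, `β = a_j b_i`; so it suffices
that `(α + β)² ≤ L + 2D` for `i ≠ j`, which follows from `(α - β)² ≤ L` and
`2αβ ≤ a_i² b_i² + a_j² b_j²`.
-/

open Matrix Finset

section
variable {ι : Type*} [Fintype ι]

def cauchySchwarzGap (a b : ι → ℝ) : ℝ :=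
  (∑ i, a i ^ 2) * (∑ i, b i ^ 2) - (∑ i, a i * b i) ^ 2

theorem cauchySchwarzGap_nonneg (a b : ι → ℝ) : 0 ≤ cauchySchwarzGap a b :=
  sub_nonneg.2 (sum_mul_sq_le_sq_mul_sq univ a b)

theorem two_mul_cauchySchwarzGap (a b : ι → ℝ) :
    2 * cauchySchwarzGap a b = ∑ i, ∑ j, (a i * b j - a j * b i) ^ 2 := by
  have hterm : ∀ i j, (a i * b j - a j * b i) ^ 2 =
      a i ^ 2 * b j ^ 2 + b i ^ 2 * a j ^ 2 - 2 * (a i * b i) * (a j * b j) :=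
    fun i j => by ring
  simp only [cauchySchwarzGap, hterm, sum_add_distrib, sum_sub_distrib, ← mul_sum, ← sum_mul]
  ring

theorem sq_sub_le_cauchySchwarzGap (a b : ι → ℝ) {i j : ι} (hij : i ≠ j) :
    (a i * b j - a j * b i) ^ 2 ≤ cauchySchwarzGap a b := by
  have hpair : (a i * b j - a j * b i) ^ 2 + (a j * b i - a i * b j) ^ 2 ≤
      ∑ k, ∑ l, (a k * b l - a l * b k) ^ 2 :=
    calc _ ≤ (∑ l, (a i * b l - a l * b i) ^ 2) + ∑ l, (a j * b l - a l * b j) ^ 2 :=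
          add_le_add (single_le_sum (fun _ _ => sq_nonneg _) (mem_univ j))
            (single_le_sum (fun _ _ => sq_nonneg _) (mem_univ i))
      _ ≤ _ := add_le_sum (f := fun k => ∑ l, (a k * b l - a l * b k) ^ 2)
            (fun _ _ => sum_nonneg fun _ _ => sq_nonneg _) (mem_univ i) (mem_univ j) hij
  rw [← two_mul_cauchySchwarzGap] at hpair
  linarith

theorem sq_sq_sub_sq_le_sq_sub_mul (a b : ι → ℝ) (i j : ι) :
    ((a i * b j) ^ 2 - (a j * b i) ^ 2) ^ 2 ≤
      (a i * b j - a j * b i) ^ 2 * (cauchySchwarzGap a b + 2 * ∑ k, (a k * b k) ^ 2) := by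
  rcases eq_or_ne i j with rfl | hij
  · simp
  have hcross : 2 * ((a i * b j) * (a j * b i)) ≤ ∑ k, (a k * b k) ^ 2 :=
    calc _ = 2 * (a i * b i) * (a j * b j) := by ring
      _ ≤ (a i * b i) ^ 2 + (a j * b j) ^ 2 := two_mul_le_add_sq _ _
      _ ≤ _ := add_le_sum (f := fun k => (a k * b k) ^ 2) (fun _ _ => sq_nonneg _)
            (mem_univ i) (mem_univ j) hij
  calc ((a i * b j) ^ 2 - (a j * b i) ^ 2) ^ 2
      = (a i * b j - a j * b i) ^ 2 *
          ((a i * b j - a j * b i) ^ 2 + 4 * ((a i * b j) * (a j * b i))) := by ring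
    _ ≤ _ := mul_le_mul_of_nonneg_left
      (by linarith [sq_sub_le_cauchySchwarzGap a b hij]) (sq_nonneg _)

theorem sum_pow_four_mul_sum_pow_four_le (a b : ι → ℝ) :
    (∑ i, a i ^ 4) * (∑ i, b i ^ 4) ≤
      (cauchySchwarzGap a b + ∑ i, (a i * b i) ^ 2) ^ 2 := by
  set L := cauchySchwarzGap a b
  set D := ∑ i, (a i * b i) ^ 2
  have hsq := two_mul_cauchySchwarzGap (fun i => a i ^ 2) (fun i => b i ^ 2)
  simp only [cauchySchwarzGap, ← pow_mul, ← mul_pow, Nat.reduceMul] at hsq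
  have hsum : ∑ i, ∑ j, ((a i * b j) ^ 2 - (a j * b i) ^ 2) ^ 2 ≤
      ∑ i, ∑ j, (a i * b j - a j * b i) ^ 2 * (L + 2 * D) := by
    gcongr with i _ j _
    exact sq_sq_sub_sq_le_sq_sub_mul a b i j
  rw [← hsq] at hsum
  simp only [← sum_mul, ← two_mul_cauchySchwarzGap] at hsum
  linarith

noncomputable def majorizerForm (q p : ι → ℂ) : ℝ :=
  (∑ i, ‖q i‖ ^ 2) * (∑ i, ‖p i‖ ^ 2) - ‖star q ⬝ᵥ p‖ ^ 2 + ∑ i, (‖q i‖ * ‖p i‖) ^ 2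

theorem star_dotProduct_self (q : ι → ℂ) : star q ⬝ᵥ q = ((∑ i, ‖q i‖ ^ 2 : ℝ) : ℂ) := by
  simp [dotProduct, Complex.conj_mul']

theorem majorizerForm_self (p : ι → ℂ) : majorizerForm p p = ∑ i, ‖p i‖ ^ 4 := by
  rw [majorizerForm, star_dotProduct_self, Complex.norm_real, Real.norm_of_nonneg
    (sum_nonneg fun _ _ => sq_nonneg _)]
  rw [← sq, sub_self, zero_add]
  exact sum_congr rfl fun _ _ => by ring

theorem norm_star_dotProduct_le (q p : ι → ℂ) : ‖star q ⬝ᵥ p‖ ≤ ∑ i, ‖q i‖ * ‖p i‖ :=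
  (norm_sum_le _ _).trans_eq (sum_congr rfl fun i _ => by simp)

theorem sum_norm_pow_four_mul_sum_norm_pow_four_le (q p : ι → ℂ) :
    (∑ i, ‖q i‖ ^ 4) * (∑ i, ‖p i‖ ^ 4) ≤ majorizerForm q p ^ 2 := by
  have hT : ‖star q ⬝ᵥ p‖ ^ 2 ≤ (∑ i, ‖q i‖ * ‖p i‖) ^ 2 :=
    pow_le_pow_left₀ (norm_nonneg _) (norm_star_dotProduct_le q p) 2
  refine (sum_pow_four_mul_sum_pow_four_le (‖q ·‖) (‖p ·‖)).trans (pow_le_pow_left₀ ?_ ?_ 2)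
  · exact add_nonneg (cauchySchwarzGap_nonneg _ _) (sum_nonneg fun _ _ => sq_nonneg _)
  · rw [majorizerForm, cauchySchwarzGap]; linarith

variable [DecidableEq ι]

theorem eq_smul_one_add_diagonal_sub_vecMulVec (p : ι → ℂ) (Q : Matrix ι ι ℂ)
    (hQ : ∀ i j, Q i j = if i = j then ((∑ k, ‖p k‖ ^ 2 : ℝ) : ℂ) else -(p i * star (p j))) :
    Q = ((∑ k, ‖p k‖ ^ 2 : ℝ) : ℂ) • 1 + diagonal (fun i => p i * star (p i)) -
      vecMulVec p (star p) := by
  ext i j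
  rw [hQ]
  by_cases h : i = j
  · subst h; simp [vecMulVec]
  · simp [h, vecMulVec]

theorem star_dotProduct_mulVec_eq_majorizerForm (q p : ι → ℂ) (Q : Matrix ι ι ℂ)
    (hQ : ∀ i j, Q i j = if i = j then ((∑ k, ‖p k‖ ^ 2 : ℝ) : ℂ) else -(p i * star (p j))) :
    star q ⬝ᵥ Q *ᵥ q = majorizerForm q p := by
  have hdiag : star q ⬝ᵥ diagonal (fun i => p i * star (p i)) *ᵥ q =
      ((∑ i, (‖q i‖ * ‖p i‖) ^ 2 : ℝ) : ℂ) := by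
    simp only [dotProduct, mulVec_diagonal, Pi.star_apply]
    push_cast
    refine sum_congr rfl fun i _ => ?_
    rw [mul_pow, ← Complex.mul_conj', ← Complex.conj_mul']
    simp only [RCLike.star_def]; ring
  have hrank : star q ⬝ᵥ vecMulVec p (star p) *ᵥ q = ((‖star q ⬝ᵥ p‖ ^ 2 : ℝ) : ℂ) := by
    rw [vecMulVec_mulVec, op_smul_eq_smul, dotProduct_smul, smul_eq_mul, star_dotProduct,
      RCLike.star_def, Complex.conj_mul']
    norm_cast
  rw [eq_smul_one_add_diagonal_sub_vecMulVec p Q hQ, sub_mulVec, add_mulVec, smul_mulVec,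
    one_mulVec, dotProduct_sub, dotProduct_add, dotProduct_smul, star_dotProduct_self, hdiag,
    hrank, smul_eq_mul, majorizerForm]
  push_cast
  ring

end

theorem star_dotProduct_mul_mul_conjTranspose_mulVec {m n α : Type*} [Fintype m] [Fintype n]
    [NonUnitalSemiring α] [StarRing α] (H : Matrix m n α) (Q : Matrix n n α) (w : m → α) :
    star w ⬝ᵥ (H * Q * Hᴴ) *ᵥ w = star (Hᴴ *ᵥ w) ⬝ᵥ Q *ᵥ (Hᴴ *ᵥ w) := by
  rw [star_mulVec, conjTranspose_conjTranspose, ← mulVec_mulVec, ← mulVec_mulVec,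
    dotProduct_mulVec]

theorem norm_conjTranspose_mulVec_pow_four {m n : Type*} [Fintype m] (x : n → m → ℂ)
    (r : n → ℝ) (H : Matrix m n ℂ) (hH : ∀ i j, H i j = (1 / (r j) : ℝ) * x j i)
    (w : m → ℂ) (j : n) :
    ‖(Hᴴ *ᵥ w) j‖ ^ 4 = ‖star w ⬝ᵥ x j‖ ^ 4 / r j ^ 4 := by
  have hq : (Hᴴ *ᵥ w) j = ((1 / r j : ℝ) : ℂ) * star (star w ⬝ᵥ x j) := by
    simp only [mulVec, dotProduct, conjTranspose_apply, hH, star_sum, star_mul',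
      Pi.star_apply, mul_sum, RCLike.star_def, Complex.conj_ofReal, Complex.conj_conj]
    exact sum_congr rfl fun _ _ => by ring
  rw [hq, norm_mul, norm_star, Complex.norm_real, mul_pow, Real.norm_eq_abs, pow_abs,
    abs_of_nonneg (by positivity), div_pow, one_pow, one_div_mul_eq_div]

open Finset in
theorem subgaussian_ggd_ilrma_majorization_general
    (N J : ℕ)
    (x : Fin J → Fin N → ℂ) (r : Fin J → ℝ)
    (wt : Fin N → ℂ)
    (H : Matrix (Fin N) (Fin J) ℂ)
    (hH : ∀ i j, H i j = (1 / (r j) : ℝ) * x j i)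
    (qt : Fin J → ℂ) (hqt : qt = H.conjTranspose.mulVec wt) (hqt0 : qt ≠ 0)
    (Qt : Matrix (Fin J) (Fin J) ℂ)
    (hQt : ∀ i j, Qt i j =
      if i = j then ((∑ k, ‖qt k‖ ^ 2 : ℝ) : ℂ)
      else -(qt i * star (qt j)))
    (G : Matrix (Fin N) (Fin N) ℂ)
    (hG : G = ((1 / Real.sqrt (J * ∑ j, ‖qt j‖ ^ 4) : ℝ) : ℂ) •
      (H * Qt * H.conjTranspose)) :
    (∀ w : Fin N → ℂ,
      (1 / J : ℝ) * ∑ j, ‖star w ⬝ᵥ x j‖ ^ 4 / (r j) ^ 4 ≤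
        ((star w ⬝ᵥ G.mulVec w).re) ^ 2) ∧
    (1 / J : ℝ) * ∑ j, ‖star wt ⬝ᵥ x j‖ ^ 4 / (r j) ^ 4 =
      ((star wt ⬝ᵥ G.mulVec wt).re) ^ 2 := by
  set B := ∑ j, ‖qt j‖ ^ 4
  have hB : 0 < B := by
    obtain ⟨j, hj⟩ := Function.ne_iff.mp hqt0
    exact sum_pos' (fun _ _ => by positivity) ⟨j, mem_univ _, by positivity⟩
  have hlhs : ∀ w, (1 / J : ℝ) * ∑ j, ‖star w ⬝ᵥ x j‖ ^ 4 / r j ^ 4 =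
      (∑ j, ‖(Hᴴ *ᵥ w) j‖ ^ 4) / J := fun w => by
    simp only [norm_conjTranspose_mulVec_pow_four x r H hH, one_div_mul_eq_div]
  have hrhs : ∀ w, (star w ⬝ᵥ G *ᵥ w).re ^ 2 = majorizerForm (Hᴴ *ᵥ w) qt ^ 2 / B / J := by
    intro w
    rw [hG, smul_mulVec, dotProduct_smul, star_dotProduct_mul_mul_conjTranspose_mulVec,
      star_dotProduct_mulVec_eq_majorizerForm _ qt Qt hQt, smul_eq_mul, ← Complex.ofReal_mul,
      Complex.ofReal_re, mul_pow, div_pow, Real.sq_sqrt (by positivity)]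
    ring
  refine ⟨fun w => ?_, ?_⟩
  · rw [hlhs, hrhs]
    refine div_le_div_of_nonneg_right ((le_div_iff₀ hB).2 ?_) J.cast_nonneg
    exact sum_norm_pow_four_mul_sum_norm_pow_four_le _ qt
  · rw [hlhs, hrhs, ← hqt, majorizerForm_self, sq, mul_div_cancel_right₀ _ hB.ne']

open Finset in
theorem subgaussian_ggd_ilrma_majorization
    (N J : ℕ) (hJ : 1 ≤ J)
    (x : Fin J → Fin N → ℂ) (r : Fin J → ℝ) (hr : ∀ j, 0 < r j)
    (wt : Fin N → ℂ)
    (H : Matrix (Fin N) (Fin J) ℂ)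
    (hH : ∀ i j, H i j = (1 / (r j) : ℝ) * x j i)
    (qt : Fin J → ℂ) (hqt : qt = H.conjTranspose.mulVec wt) (hqt0 : qt ≠ 0)
    (Qt : Matrix (Fin J) (Fin J) ℂ)
    (hQt : ∀ i j, Qt i j =
      if i = j then ((∑ k, ‖qt k‖ ^ 2 : ℝ) : ℂ)
      else -(qt i * star (qt j)))
    (G : Matrix (Fin N) (Fin N) ℂ)
    (hG : G = ((1 / Real.sqrt (J * ∑ j, ‖qt j‖ ^ 4) : ℝ) : ℂ) •
      (H * Qt * H.conjTranspose)) :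
    (∀ w : Fin N → ℂ,
      (1 / J : ℝ) * ∑ j, ‖star w ⬝ᵥ x j‖ ^ 4 / (r j) ^ 4 ≤
        ((star w ⬝ᵥ G.mulVec w).re) ^ 2) ∧
    (1 / J : ℝ) * ∑ j, ‖star wt ⬝ᵥ x j‖ ^ 4 / (r j) ^ 4 =
      ((star wt ⬝ᵥ G.mulVec wt).re) ^ 2 :=
  subgaussian_ggd_ilrma_majorization_general N J x r wt H hH qt hqt hqt0 Qt hQt G hG
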